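/- arXiv:1204.2444 — 11 statements merged into one kernel-verified Lean document; each statement's English description precedes it below -/
import Mathlib

section
/- A ring R is π-regular (for each a ∈ R there exist a positive integer n and x ∈ R with a^n = a^n x a^n) if and only if R, viewed as a right module over itself, is dual π-Rickart (for every f in End_R(R), there exist an idempotent e and a positive integer n such that the image of f^n equals e·R). -/
section Aux

variable {R : Type*} [Ring R]

/-- Left multiplication as an `Rᵐᵒᵖ`-linear endomorphism of `R`. -/
def lmulOp (a : R) : Module.End Rᵐᵒᵖ R where
  toFun m := a * m
  map_add' x y := mul_add a x y
  map_smul' r m := by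
    simp only [MulOpposite.smul_eq_mul_unop, RingHom.id_apply, mul_assoc]

@[simp] lemma lmulOp_apply (a m : R) : lmulOp a m = a * m := rfl

lemma endOp_apply (f : Module.End Rᵐᵒᵖ R) (m : R) : f m = f 1 * m := by
  have h : m = MulOpposite.op m • (1 : R) := by
    simp [MulOpposite.smul_eq_mul_unop]
  conv_lhs => rw [h]
  rw [f.map_smul]
  simp [MulOpposite.smul_eq_mul_unop]

lemma endOp_pow_one (f : Module.End Rᵐᵒᵖ R) (n : ℕ) : (f ^ n) 1 = (f 1) ^ n := by
  induction n with
  | zero => simp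
  | succ k ih =>
    rw [pow_succ, Module.End.mul_apply, endOp_apply (f ^ k) (f 1), ih, ← pow_succ]

lemma endOp_pow_apply (f : Module.End Rᵐᵒᵖ R) (n : ℕ) (m : R) :
    (f ^ n) m = (f 1) ^ n * m := by
  rw [endOp_apply (f ^ n) m, endOp_pow_one]

end Aux

/-- A ring `R` is π-regular iff `R`, viewed as a right module over itself
(i.e. as a module over `Rᵐᵒᵖ`), is dual π-Rickart. -/
theorem piRegular_iff_dualPiRickart_self (R : Type*) [Ring R] :
    (∀ a : R, ∃ (n : ℕ) (x : R), 0 < n ∧ a ^ n = a ^ n * x * a ^ n) ↔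
    (∀ f : Module.End Rᵐᵒᵖ R, ∃ (e : Module.End Rᵐᵒᵖ R) (n : ℕ),
      0 < n ∧ IsIdempotentElem e ∧ LinearMap.range (f ^ n) = LinearMap.range e) := by
  constructor
  · intro h f
    obtain ⟨n, x, hn, hx⟩ := h (f 1)
    have key : (f 1 ^ n * x) * (f 1 ^ n * x) = f 1 ^ n * x := by
      rw [← mul_assoc, ← hx]
    refine ⟨lmulOp (f 1 ^ n * x), n, hn, ?_, ?_⟩
    · refine LinearMap.ext fun m => ?_
      show f 1 ^ n * x * (f 1 ^ n * x * m) = f 1 ^ n * x * m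
      rw [← mul_assoc, key]
    · ext y
      simp only [LinearMap.mem_range]
      constructor
      · rintro ⟨m, rfl⟩
        refine ⟨f 1 ^ n * m, ?_⟩
        show f 1 ^ n * x * (f 1 ^ n * m) = (f ^ n) m
        rw [endOp_pow_apply, ← mul_assoc, ← hx]
      · rintro ⟨m, rfl⟩
        refine ⟨x * m, ?_⟩
        show (f ^ n) (x * m) = f 1 ^ n * x * m
        rw [endOp_pow_apply, mul_assoc]
  · intro h a
    obtain ⟨e, n, hn, he, hr⟩ := h (lmulOp a)
    have hpow : ∀ m : R, ((lmulOp a) ^ n) m = a ^ n * m := by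
      intro m; rw [endOp_pow_apply]; simp
    have heu : ∀ m : R, e m = e 1 * m := fun m => endOp_apply e m
    have huu : e 1 * e 1 = e 1 := by
      have h1 := congrArg (fun g : Module.End Rᵐᵒᵖ R => g 1) he
      simp only [Module.End.mul_apply] at h1
      rw [heu (e 1)] at h1
      exact h1
    have h1 : ∃ t : R, a ^ n * t = e 1 := by
      have hmem : e 1 ∈ LinearMap.range ((lmulOp a) ^ n) := by
        rw [hr]; exact ⟨1, rfl⟩
      obtain ⟨t, ht⟩ := hmem
      exact ⟨t, by rw [← hpow t, ht]⟩
    have h2 : ∃ s : R, e 1 * s = a ^ n := by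
      have hmem : a ^ n ∈ LinearMap.range e := by
        rw [← hr]; exact ⟨1, by rw [hpow 1, mul_one]⟩
      obtain ⟨s, hs⟩ := hmem
      exact ⟨s, by rw [← heu s, hs]⟩
    obtain ⟨t, ht⟩ := h1
    obtain ⟨s, hs⟩ := h2
    refine ⟨n, t, hn, ?_⟩
    calc a ^ n = e 1 * s := hs.symm
      _ = e 1 * e 1 * s := by rw [huu]
      _ = e 1 * (e 1 * s) := by rw [mul_assoc]
      _ = e 1 * a ^ n := by rw [hs]
      _ = a ^ n * t * a ^ n := by rw [← ht]
end

section
/- If M is a dual π-Rickart right R-module whose endomorphism ring S is reduced (has no nonzero nilpotent elements), then M is dual Rickart, i.e., for every f ∈ S, Im(f) = eM for some idempotent e ∈ S. -/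
/-- In a reduced ring, idempotents are central. -/
lemma idem_comm_of_reduced {S : Type*} [Ring S] [IsReduced S]
    {e : S} (he : e * e = e) (x : S) : e * x = x * e := by
  have hmid : (1 - e) * e = 0 := by rw [sub_mul, one_mul, he, sub_self]
  have hmid' : e * (1 - e) = 0 := by rw [mul_sub, mul_one, he, sub_self]
  have h1 : e * x * (1 - e) = 0 := by
    refine IsReduced.eq_zero _ ⟨2, ?_⟩
    have : (e * x * (1 - e)) ^ 2 = e * x * ((1 - e) * e) * (x * (1 - e)) := by
      noncomm_ring
    rw [this, hmid, mul_zero, zero_mul]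
  have h2 : (1 - e) * x * e = 0 := by
    refine IsReduced.eq_zero _ ⟨2, ?_⟩
    have : ((1 - e) * x * e) ^ 2 = (1 - e) * x * (e * (1 - e)) * (x * e) := by
      noncomm_ring
    rw [this, hmid', mul_zero, zero_mul]
  have h1' : e * x = e * x * e := by
    have : e * x * (1 - e) = e * x - e * x * e := by rw [mul_sub, mul_one]
    rw [this] at h1
    exact (sub_eq_zero.mp h1)
  have h2' : x * e = e * (x * e) := by
    have : (1 - e) * x * e = x * e - e * (x * e) := by
      rw [sub_mul, one_mul, sub_mul, mul_assoc]
    rw [this] at h2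
    exact sub_eq_zero.mp h2
  rw [h1', h2', mul_assoc]

/-- If `M` is dual π-Rickart and its endomorphism ring is reduced,
then `M` is dual Rickart. -/
theorem dualRickart_of_dualPiRickart_of_reduced
    {R M : Type*} [Ring R] [AddCommGroup M] [Module R M]
    (hdpr : ∀ f : Module.End R M, ∃ (e : Module.End R M) (n : ℕ),
      0 < n ∧ IsIdempotentElem e ∧ LinearMap.range (f ^ n) = LinearMap.range e)
    (hred : IsReduced (Module.End R M)) :
    ∀ f : Module.End R M, ∃ e : Module.End R M,
      IsIdempotentElem e ∧ LinearMap.range f = LinearMap.range e := by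
  intro f
  obtain ⟨e, n, hn, he, hrange⟩ := hdpr f
  refine ⟨e, he, le_antisymm ?_ ?_⟩
  · -- range f ⊆ range e
    have hcomm : e * f = f * e := idem_comm_of_reduced he f
    have hkill : (1 - e) * f ^ n = 0 := by
      ext m
      simp only [Module.End.mul_apply, LinearMap.zero_apply, LinearMap.sub_apply,
        Module.End.one_apply]
      have hm : (f ^ n) m ∈ LinearMap.range e := hrange ▸ LinearMap.mem_range_self _ m
      obtain ⟨y, hy⟩ := hm
      have hfix : e ((f ^ n) m) = (f ^ n) m := by
        rw [← hy, ← Module.End.mul_apply, he]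
      rw [hfix, sub_self]
    have hcomm' : Commute (1 - e) f := (Commute.one_left f).sub_left hcomm
    have hnil : ((1 - e) * f) ^ n = 0 := by
      rw [hcomm'.mul_pow]
      obtain ⟨k, rfl⟩ := Nat.exists_eq_succ_of_ne_zero hn.ne'
      rw [(he.one_sub).pow_succ_eq, hkill]
    have hzero : (1 - e) * f = 0 := IsReduced.eq_zero _ ⟨n, hnil⟩
    have hef : e * f = f := by
      have : (1 - e) * f = f - e * f := by rw [sub_mul, one_mul]
      rw [this] at hzero
      exact (sub_eq_zero.mp hzero).symm
    rintro x ⟨m, rfl⟩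
    refine ⟨f m, ?_⟩
    conv_rhs => rw [← hef]
    rfl
  · -- range e = range f^n ⊆ range f
    rw [← hrange]
    rintro x ⟨m, rfl⟩
    obtain ⟨k, rfl⟩ := Nat.exists_eq_succ_of_ne_zero hn.ne'
    refine ⟨(f ^ k) m, ?_⟩
    rw [pow_succ']
    rfl
end

section
/- If M is a dual π-Rickart module satisfying condition D₂ (every submodule N of M with M/N isomorphic to a direct summand of M is itself a direct summand), then M is π-Rickart, i.e., for every f ∈ End_R(M) there exist an idempotent e and a positive integer n with Ker(f^n) = eM. -/
open LinearMap

theorem exists_isCompl_ker_of_isCompl_range {R M : Type*} [Ring R] [AddCommGroup M] [Module R M]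
    (hD2 : ∀ N : Submodule R M,
      (∃ K P : Submodule R M, IsCompl K P ∧ Nonempty ((M ⧸ N) ≃ₗ[R] K)) →
      ∃ P : Submodule R M, IsCompl N P)
    {g : Module.End R M} {P : Submodule R M} (h : IsCompl (range g) P) :
    ∃ Q : Submodule R M, IsCompl (ker g) Q :=
  hD2 _ ⟨range g, P, h, ⟨g.quotKerEquivRange⟩⟩

/-- A dual π-Rickart module with the D₂ condition is π-Rickart. -/
theorem piRickart_of_dualPiRickart_of_D2
    {R M : Type*} [Ring R] [AddCommGroup M] [Module R M]
    (hdpr : ∀ f : Module.End R M, ∃ (e : Module.End R M) (n : ℕ),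
      0 < n ∧ IsIdempotentElem e ∧ LinearMap.range (f ^ n) = LinearMap.range e)
    (hD2 : ∀ N : Submodule R M,
      (∃ K P : Submodule R M, IsCompl K P ∧ Nonempty ((M ⧸ N) ≃ₗ[R] K)) →
      ∃ P : Submodule R M, IsCompl N P) :
    ∀ f : Module.End R M, ∃ (e : Module.End R M) (n : ℕ),
      0 < n ∧ IsIdempotentElem e ∧ LinearMap.ker (f ^ n) = LinearMap.range e := by
  intro f
  obtain ⟨e, n, hn, he, hr⟩ := hdpr f
  obtain ⟨Q, hQ⟩ := exists_isCompl_ker_of_isCompl_range hD2 (hr ▸ he.isCompl)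
  exact ⟨_, n, hn, Submodule.isIdempotentElem_projection hQ, (Submodule.range_projection hQ).symm⟩
end

section
/- If M is a π-Rickart module satisfying condition C₂ (every submodule of M isomorphic to a direct summand of M is itself a direct summand), then M is dual π-Rickart. -/
/-!
If `Ker (fⁿ) = eM` for an idempotent `e`, then `Ker (fⁿ)` has the complement `Ker e`, so
`Im (fⁿ) ≅ M / Ker (fⁿ) ≅ Ker e` is isomorphic to a direct summand. By C₂ it is itself a direct
summand, i.e. the image of an idempotent.
-/

open LinearMap

namespace LinearMap

variable {R M M₂ : Type*} [Ring R] [AddCommGroup M] [Module R M] [AddCommGroup M₂] [Module R M₂]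

theorem nonempty_linearEquiv_range_of_isCompl_ker {f : M →ₗ[R] M₂} {K : Submodule R M}
    (h : IsCompl (ker f) K) : Nonempty (range f ≃ₗ[R] K) :=
  ⟨f.quotKerEquivRange.symm.trans (Submodule.quotientEquivOfIsCompl _ _ h)⟩

theorem exists_isCompl_range_of_isCompl_ker
    (hC2 : ∀ N K P : Submodule R M, IsCompl K P → Nonempty (N ≃ₗ[R] K) →
      ∃ Q : Submodule R M, IsCompl N Q)
    {f : Module.End R M} {K : Submodule R M} (h : IsCompl (ker f) K) :
    ∃ Q : Submodule R M, IsCompl (range f) Q :=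
  hC2 _ K _ h.symm (nonempty_linearEquiv_range_of_isCompl_ker h)

end LinearMap

/-- A π-Rickart module with the C₂ condition is dual π-Rickart. -/
theorem dualPiRickart_of_piRickart_of_C2
    {R M : Type*} [Ring R] [AddCommGroup M] [Module R M]
    (hpr : ∀ f : Module.End R M, ∃ (e : Module.End R M) (n : ℕ),
      0 < n ∧ IsIdempotentElem e ∧ LinearMap.ker (f ^ n) = LinearMap.range e)
    (hC2 : ∀ N K P : Submodule R M, IsCompl K P → Nonempty (N ≃ₗ[R] K) →
      ∃ Q : Submodule R M, IsCompl N Q) :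
    ∀ f : Module.End R M, ∃ (e : Module.End R M) (n : ℕ),
      0 < n ∧ IsIdempotentElem e ∧ LinearMap.range (f ^ n) = LinearMap.range e := by
  intro f
  obtain ⟨e, n, hn, he, hker⟩ := hpr f
  have hcompl : IsCompl (ker (f ^ n)) (ker e) := hker ▸ he.isCompl
  obtain ⟨Q, hQ⟩ := exists_isCompl_range_of_isCompl_ker hC2 hcompl
  exact ⟨_, n, hn, Submodule.isIdempotentElem_projection hQ,
    (Submodule.range_projection hQ).symm⟩
end

section
/- Every direct summand of a dual π-Rickart module is dual π-Rickart: if M = N ⊕ P is dual π-Rickart, then N is dual π-Rickart (as a module with endomorphism ring End_R(N)). -/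
/-!
Given `f ∈ End N`, extend it by zero along the complement to `F = ι ∘ f ∘ π ∈ End M`, where
`ι : N → M` is the inclusion and `π : M → N` the projection along `P`. Since `π ∘ ι = id`,
`F ^ n = ι ∘ f ^ n ∘ π` for `n ≥ 1`, so `Im (F ^ n) = ι (Im (f ^ n))`. An idempotent
`e ∈ End M` with `Im e = Im (F ^ n)` therefore maps into `N`, and its restriction to `N` is an
idempotent of `End N` with image `Im (f ^ n)`.
-/

namespace LinearMap

variable {R M : Type*} [Semiring R] [AddCommMonoid M] [Module R M]

theorem comp_comp_pow_succ {N : Type*} [AddCommMonoid N] [Module R N] {i : N →ₗ[R] M}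
    {p : M →ₗ[R] N} (hpi : p ∘ₗ i = id) (f : Module.End R N) (n : ℕ) :
    (i ∘ₗ f ∘ₗ p) ^ (n + 1) = i ∘ₗ (f ^ (n + 1)) ∘ₗ p := by
  induction n with
  | zero => simp
  | succ n ih =>
    rw [pow_succ, ih, pow_succ _ (n + 1), Module.End.mul_eq_comp, Module.End.mul_eq_comp]
    ext x
    simp only [coe_comp, Function.comp_apply, ← comp_apply p i, hpi, id_apply]

variable {N : Submodule R M} {e : Module.End R M}

theorem IsIdempotentElem.restrict (he : IsIdempotentElem e) (h : ∀ x ∈ N, e x ∈ N) :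
    IsIdempotentElem (e.restrict h) :=
  LinearMap.ext fun x => Subtype.ext (LinearMap.congr_fun he x)

theorem IsIdempotentElem.range_restrict (he : IsIdempotentElem e) (h : ∀ x ∈ N, e x ∈ N) :
    range (e.restrict h) = (range e).comap N.subtype := by
  ext x
  rw [IsIdempotentElem.mem_range_iff (IsIdempotentElem.restrict he h), Submodule.mem_comap,
    IsIdempotentElem.mem_range_iff he, Subtype.ext_iff]
  rfl

end LinearMap

namespace Module.End

open LinearMap

variable {R M : Type*} [Semiring R] [AddCommMonoid M] [Module R M]

/-- `M` is dual π-Rickart when every endomorphism has this property. -/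
def HasIdempotentRangePow (f : Module.End R M) : Prop :=
  ∃ (e : Module.End R M) (n : ℕ), 0 < n ∧ IsIdempotentElem e ∧ range (f ^ n) = range e

theorem HasIdempotentRangePow.of_comp_retraction {N : Submodule R M} {p : M →ₗ[R] N}
    (hp : p ∘ₗ N.subtype = LinearMap.id) {f : Module.End R N}
    (h : HasIdempotentRangePow (N.subtype ∘ₗ f ∘ₗ p)) : HasIdempotentRangePow f := by
  obtain ⟨e, n, hn, he, hrange⟩ := h
  obtain ⟨m, rfl⟩ := Nat.exists_eq_add_of_lt hn
  have hp_surj : range p = ⊤ := range_eq_top.2 fun x => ⟨x, LinearMap.congr_fun hp x⟩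
  have hrange_e : range e = (range (f ^ (m + 1))).map N.subtype := by
    rw [← hrange, zero_add, comp_comp_pow_succ hp, range_comp,
      range_comp_of_range_eq_top _ hp_surj]
  have heN : ∀ x ∈ N, e x ∈ N := fun x _ =>
    Submodule.map_subtype_le _ _ (hrange_e ▸ mem_range_self e x)
  refine ⟨e.restrict heN, m + 1, m.succ_pos, he.restrict heN, ?_⟩
  rw [he.range_restrict, hrange_e, Submodule.comap_map_eq_of_injective N.injective_subtype]

end Module.End

/-- A direct summand of a dual π-Rickart module is dual π-Rickart. -/
theorem dualPiRickart_of_summand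
    {R M : Type*} [Ring R] [AddCommGroup M] [Module R M]
    (N P : Submodule R M) (hNP : IsCompl N P)
    (hdpr : ∀ f : Module.End R M, ∃ (e : Module.End R M) (n : ℕ),
      0 < n ∧ IsIdempotentElem e ∧ LinearMap.range (f ^ n) = LinearMap.range e) :
    ∀ f : Module.End R N, ∃ (e : Module.End R N) (n : ℕ),
      0 < n ∧ IsIdempotentElem e ∧ LinearMap.range (f ^ n) = LinearMap.range e := fun _ =>
  Module.End.HasIdempotentRangePow.of_comp_retraction (N.projectionOnto_comp_subtype hNP)
    (hdpr _)
end

section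
/- If M is a dual π-Rickart right R-module, then S = End_R(M) is a generalized left principally projective ring: for every f ∈ S there exist an idempotent e ∈ S and a positive integer n such that the left annihilator l_S(f^n) = {g ∈ S : g ∘ f^n = 0} equals S(1−e). -/
/-- If `M` is dual π-Rickart, then `S = End_R(M)` is a generalized left
principally projective ring: for every `f ∈ S` there are an idempotent `e`
and a positive integer `n` with `l_S(f^n) = S(1 - e)`. -/
theorem endRing_generalized_left_pp_of_dualPiRickart
    {R M : Type*} [Ring R] [AddCommGroup M] [Module R M]
    (hdpr : ∀ f : Module.End R M, ∃ (e : Module.End R M) (n : ℕ),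
      0 < n ∧ IsIdempotentElem e ∧ LinearMap.range (f ^ n) = LinearMap.range e) :
    ∀ f : Module.End R M, ∃ (e : Module.End R M) (n : ℕ), 0 < n ∧
      IsIdempotentElem e ∧
      ∀ g : Module.End R M, g * f ^ n = 0 ↔ ∃ s : Module.End R M, g = s * (1 - e) := by
  intro f
  obtain ⟨e, n, hn, he, hr⟩ := hdpr f
  refine ⟨e, n, hn, he, fun g => ⟨fun hg => ?_, fun ⟨s, hs⟩ => ?_⟩⟩
  · refine ⟨g, ?_⟩
    have hge : g * e = 0 := by
      ext x
      have hx : e x ∈ LinearMap.range (f ^ n) := by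
        rw [hr]; exact ⟨x, rfl⟩
      obtain ⟨y, hy⟩ := hx
      have := congrArg (fun h : Module.End R M => h y) hg
      simpa [Module.End.mul_apply, hy] using this
    have : g * (1 - e) = g - g * e := by rw [mul_sub, mul_one]
    rw [this, hge, sub_zero]
  · subst hs
    ext x
    have hx : (f ^ n) x ∈ LinearMap.range e := by
      rw [← hr]; exact ⟨x, rfl⟩
    obtain ⟨y, hy⟩ := hx
    have hey : e ((f ^ n) x) = (f ^ n) x := by
      conv_lhs => rw [← hy]
      rw [← Module.End.mul_apply, he, hy]
    simp [Module.End.mul_apply, hey]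
end

section
/- If the endomorphism ring S = End_R(M) of a right R-module M is π-regular, then M is dual π-Rickart. -/
/-- If the endomorphism ring of `M` is π-regular, then `M` is dual π-Rickart. -/
theorem dualPiRickart_of_piRegular_end
    {R M : Type*} [Ring R] [AddCommGroup M] [Module R M]
    (hpr : ∀ f : Module.End R M, ∃ (n : ℕ) (g : Module.End R M),
      0 < n ∧ f ^ n = f ^ n * g * f ^ n) :
    ∀ f : Module.End R M, ∃ (e : Module.End R M) (n : ℕ),
      0 < n ∧ IsIdempotentElem e ∧ LinearMap.range (f ^ n) = LinearMap.range e := by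
  intro f
  obtain ⟨n, g, hn, hfg⟩ := hpr f
  refine ⟨f ^ n * g, n, hn, ?_, ?_⟩
  · show f ^ n * g * (f ^ n * g) = f ^ n * g
    conv_lhs => rw [← mul_assoc, mul_assoc (f ^ n) g, ← mul_assoc, ← hfg]
  · apply le_antisymm
    · rintro x ⟨y, hy⟩
      refine ⟨(f ^ n) y, ?_⟩
      have : ((f ^ n * g * f ^ n) : Module.End R M) y = x := by rw [← hfg]; exact hy
      simpa [Module.End.mul_apply] using this
    · rintro x ⟨y, hy⟩
      exact ⟨g y, by simpa [Module.End.mul_apply] using hy⟩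
end

section
/- If M is a right R-module with condition D₂, then M is dual π-Rickart if and only if End_R(M) is a π-regular ring. -/
/-- For a module with the D₂ condition, `M` is dual π-Rickart iff its
endomorphism ring is π-regular. -/
theorem dualPiRickart_iff_piRegular_end_of_D2
    {R M : Type*} [Ring R] [AddCommGroup M] [Module R M]
    (hD2 : ∀ N : Submodule R M,
      (∃ K P : Submodule R M, IsCompl K P ∧ Nonempty ((M ⧸ N) ≃ₗ[R] K)) →
      ∃ P : Submodule R M, IsCompl N P) :
    (∀ f : Module.End R M, ∃ (e : Module.End R M) (n : ℕ),
      0 < n ∧ IsIdempotentElem e ∧ LinearMap.range (f ^ n) = LinearMap.range e) ↔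
    (∀ f : Module.End R M, ∃ (n : ℕ) (g : Module.End R M),
      0 < n ∧ f ^ n = f ^ n * g * f ^ n) := by
  constructor
  · intro hdp f
    obtain ⟨e, n, hn, he, hrange⟩ := hdp f
    set h : Module.End R M := f ^ n with hh
    have hefix : ∀ y ∈ LinearMap.range e, e y = y := by
      rintro _ ⟨x, rfl⟩
      exact congrFun (congrArg DFunLike.coe he) x
    have hproj : LinearMap.IsProj (LinearMap.range e) e :=
      ⟨fun x => ⟨x, rfl⟩, hefix⟩
    have hcompl_e : IsCompl (LinearMap.range e) (LinearMap.ker e) := hproj.isCompl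
    obtain ⟨P, hP⟩ := hD2 (LinearMap.ker h)
      ⟨LinearMap.range e, LinearMap.ker e, hcompl_e,
        ⟨h.quotKerEquivRange.trans (LinearEquiv.ofEq _ _ hrange)⟩⟩
    -- the equivalence P ≃ range h
    let φ : P ≃ₗ[R] LinearMap.range h :=
      (Submodule.quotientEquivOfIsCompl (LinearMap.ker h) P hP).symm.trans
        h.quotKerEquivRange
    have hφ : ∀ p : P, (φ p : M) = h p := by
      intro p
      simp only [φ, LinearEquiv.trans_apply,
        Submodule.quotientEquivOfIsCompl_symm_apply,
        LinearMap.quotKerEquivRange_apply_mk]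
    have hmem : ∀ x : M, e x ∈ LinearMap.range h := by
      intro x; rw [hrange]; exact ⟨x, rfl⟩
    let g : Module.End R M :=
      P.subtype ∘ₗ (φ.symm : LinearMap.range h →ₗ[R] P) ∘ₗ
        LinearMap.codRestrict (LinearMap.range h) e hmem
    refine ⟨n, g, hn, ?_⟩
    ext x
    show h x = h (g (h x))
    have hx : h x ∈ LinearMap.range e := hrange ▸ ⟨x, rfl⟩
    have h1 : (LinearMap.codRestrict (LinearMap.range h) e hmem) (h x)
        = ⟨h x, hrange ▸ hx⟩ := by
      ext; simp [hefix _ hx]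
    have : g (h x) = (φ.symm ⟨h x, hrange ▸ hx⟩ : M) := by
      simp only [g, LinearMap.comp_apply, h1, Submodule.coe_subtype]
      rfl
    rw [this]
    have := hφ (φ.symm ⟨h x, hrange ▸ hx⟩)
    rw [LinearEquiv.apply_symm_apply] at this
    exact this
  · intro hpr f
    obtain ⟨n, g, hn, hg⟩ := hpr f
    refine ⟨f ^ n * g, n, hn, ?_, ?_⟩
    · show f ^ n * g * (f ^ n * g) = f ^ n * g
      calc f ^ n * g * (f ^ n * g) = (f ^ n * g * f ^ n) * g := by rw [← mul_assoc]
        _ = f ^ n * g := by rw [← hg]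
    · apply le_antisymm
      · rintro y ⟨x, hx⟩
        refine ⟨(f ^ n) x, ?_⟩
        show (f ^ n * g) ((f ^ n) x) = y
        rw [← hx]
        have := congrFun (congrArg DFunLike.coe hg) x
        simpa [mul_assoc] using this.symm
      · rintro y ⟨x, hx⟩
        exact ⟨g x, by simpa using hx⟩
end

section
/- If M is a dual π-Rickart module, then every endomorphism of M with small (superfluous) image is nilpotent. -/
/-- In a dual π-Rickart module, every endomorphism with small (superfluous)
image is nilpotent. -/
theorem nilpotent_of_small_image_of_dualPiRickart
    {R M : Type*} [Ring R] [AddCommGroup M] [Module R M]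
    (hdpr : ∀ f : Module.End R M, ∃ (e : Module.End R M) (n : ℕ),
      0 < n ∧ IsIdempotentElem e ∧ LinearMap.range (f ^ n) = LinearMap.range e) :
    ∀ f : Module.End R M,
      (∀ L : Submodule R M, LinearMap.range f ⊔ L = ⊤ → L = ⊤) →
      IsNilpotent f := by
  intro f hsmall
  obtain ⟨e, n, hn, he, hre⟩ := hdpr f
  -- range (f^n) ≤ range f
  have hle : LinearMap.range (f ^ n) ≤ LinearMap.range f := by
    obtain ⟨m, rfl⟩ := Nat.exists_eq_succ_of_ne_zero hn.ne'
    have h : (f ^ (m + 1)) = f ∘ₗ (f ^ m) := by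
      ext x; simp [pow_succ', Module.End.mul_apply]
    rw [h]
    exact LinearMap.range_comp_le_range _ _
  -- range e ⊔ ker e = ⊤
  have hsup : LinearMap.range e ⊔ LinearMap.ker e = ⊤ := by
    rw [eq_top_iff]
    intro x _
    have h1 : e x ∈ LinearMap.range e := ⟨x, rfl⟩
    have h2 : x - e x ∈ LinearMap.ker e := by
      have := congrArg (fun g : Module.End R M => g x) he
      simp only [Module.End.mul_apply] at this
      simp [LinearMap.mem_ker, map_sub, this]
    have : x = e x + (x - e x) := by abel
    rw [this]
    exact Submodule.add_mem_sup h1 h2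
  have hker : LinearMap.ker e = ⊤ := by
    apply hsmall
    rw [eq_top_iff, ← hsup]
    exact sup_le_sup_right (hre ▸ hle) _
  have he0 : e = 0 := by
    ext x
    have := LinearMap.ker_eq_top.mp hker
    simp [this]
  have : LinearMap.range (f ^ n) = ⊥ := by
    rw [hre, he0, LinearMap.range_zero]
  exact ⟨n, LinearMap.range_eq_bot.mp this⟩
end

section
/- A right R-module M is dual π-Rickart if and only if its endomorphism ring S is generalized left principally projective and f^n M = r_M(l_S(f^n M)) for all f ∈ S and the corresponding positive integer n, where l_S(X) = {g ∈ S : gX = 0} for X ⊆ M and r_M(T) = {m ∈ M : Tm = 0} for T ⊆ S. -/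
/-- `M` is dual π-Rickart iff `S = End_R(M)` is generalized left principally
projective and `f^n M = r_M(l_S(f^n M))` for every `f ∈ S` and the
corresponding positive integer `n`. -/
theorem dualPiRickart_iff_glpp_and_double_annihilator
    {R M : Type*} [Ring R] [AddCommGroup M] [Module R M] :
    (∀ f : Module.End R M, ∃ (e : Module.End R M) (n : ℕ),
      0 < n ∧ IsIdempotentElem e ∧ LinearMap.range (f ^ n) = LinearMap.range e) ↔
    (∀ f : Module.End R M, ∃ (e : Module.End R M) (n : ℕ), 0 < n ∧
      IsIdempotentElem e ∧
      (∀ g : Module.End R M,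
        (∀ x ∈ LinearMap.range (f ^ n), g x = 0) ↔ ∃ s, g = s * e) ∧
      (LinearMap.range (f ^ n) : Set M) =
        {m : M | ∀ g : Module.End R M,
          (∀ x ∈ LinearMap.range (f ^ n), g x = 0) → g m = 0}) := by
  constructor
  · intro h f
    obtain ⟨e, n, hn, he, hr⟩ := h f
    refine ⟨1 - e, n, hn, he.one_sub, ?_, ?_⟩
    · intro g
      constructor
      · intro hg
        refine ⟨g, ?_⟩
        ext x
        have hx : g (e x) = 0 := hg _ (hr ▸ LinearMap.mem_range.2 ⟨x, rfl⟩)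
        simp [Module.End.mul_apply, LinearMap.sub_apply, map_sub, hx]
      · rintro ⟨s, rfl⟩ x hx
        rw [hr] at hx
        obtain ⟨y, rfl⟩ := hx
        have : e (e y) = e y := congrFun (congrArg DFunLike.coe he) y
        simp [Module.End.mul_apply, LinearMap.sub_apply, map_sub, this]
    · ext m
      simp only [SetLike.mem_coe, Set.mem_setOf_eq]
      constructor
      · intro hm g hg
        exact hg m hm
      · intro hm
        have h1 : ∀ x ∈ LinearMap.range (f ^ n), (1 - e) x = 0 := by
          intro x hx
          rw [hr] at hx
          obtain ⟨y, rfl⟩ := hx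
          have : e (e y) = e y := congrFun (congrArg DFunLike.coe he) y
          simp [LinearMap.sub_apply, this]
        have h2 := hm (1 - e) h1
        have : m = e m := by
          have := h2
          simp only [LinearMap.sub_apply, Module.End.one_apply, sub_eq_zero] at this
          exact this
        rw [hr]
        exact ⟨m, this.symm⟩
  · intro h f
    obtain ⟨e, n, hn, he, hl, hd⟩ := h f
    refine ⟨1 - e, n, hn, he.one_sub, ?_⟩
    have heann : ∀ x ∈ LinearMap.range (f ^ n), e x = 0 := by
      have := (hl e).2 ⟨1, (one_mul e).symm⟩
      exact this
    ext m
    constructor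
    · intro hm
      exact ⟨m, by simp [LinearMap.sub_apply, heann m hm]⟩
    · rintro ⟨y, rfl⟩
      have : ((1 - e) y : M) ∈ {m : M | ∀ g : Module.End R M,
          (∀ x ∈ LinearMap.range (f ^ n), g x = 0) → g m = 0} := by
        intro g hg
        obtain ⟨s, rfl⟩ := (hl g).1 hg
        have : e (e y) = e y := congrFun (congrArg DFunLike.coe he) y
        simp [Module.End.mul_apply, LinearMap.sub_apply, map_sub, this]
      have hmem : ((1 - e) y : M) ∈ (LinearMap.range (f ^ n) : Set M) := by
        rw [hd]; exact this
      exact hmem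
end

section
/- If M is a dual π-Rickart module, then every element of the left singular ideal Z_l(S) of its endomorphism ring S is nilpotent, and Z_l(S) is contained in the Jacobson radical J(S). -/
private lemma nilpotent_of_essential_ann
    {R M : Type*} [Ring R] [AddCommGroup M] [Module R M]
    (hdpr : ∀ f : Module.End R M, ∃ (e : Module.End R M) (n : ℕ),
      0 < n ∧ IsIdempotentElem e ∧ LinearMap.range (f ^ n) = LinearMap.range e)
    (f : Module.End R M)
    (hf : ∀ J : Submodule (Module.End R M) (Module.End R M), J ≠ ⊥ →
        LinearMap.ker (LinearMap.toSpanSingleton (Module.End R M)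
          (Module.End R M) f) ⊓ J ≠ ⊥) : IsNilpotent f := by
  obtain ⟨e, n, hn, he, hr⟩ := hdpr f
  by_cases he0 : e = 0
  · refine ⟨n, ?_⟩
    subst he0
    rw [LinearMap.range_zero, LinearMap.range_eq_bot] at hr
    exact hr
  · exfalso
    have hspan : (Submodule.span (Module.End R M) {e} :
        Submodule (Module.End R M) (Module.End R M)) ≠ ⊥ := by
      intro h
      exact he0 (by
        have := Submodule.mem_span_singleton_self (R := Module.End R M) e
        rw [h, Submodule.mem_bot] at this
        exact this)
    apply hf _ hspan
    rw [eq_bot_iff]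
    intro h hh
    rw [Submodule.mem_inf, LinearMap.mem_ker, LinearMap.toSpanSingleton_apply,
      Submodule.mem_span_singleton] at hh
    obtain ⟨hk', a, rfl⟩ := hh
    have hk : a * e * f = 0 := hk'
    rw [Submodule.mem_bot]
    show a * e = 0
    -- hk : (a * e) * f = 0 ; show a * e = 0
    have hpow : (a * e) * f ^ n = 0 := by
      obtain ⟨m, rfl⟩ := Nat.exists_eq_add_of_lt hn
      rw [pow_succ', ← mul_assoc, hk, zero_mul]
    have key : ∀ x ∈ LinearMap.range e, (a * e) x = 0 := by
      intro x hx
      rw [← hr] at hx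
      obtain ⟨y, rfl⟩ := hx
      exact congrFun (congrArg DFunLike.coe hpow) y
    ext m
    have h1 : (a * e) (e m) = 0 := key (e m) ⟨m, rfl⟩
    have h2 : (a * e) m = (a * e) (e m) := by
      show a (e m) = a (e (e m))
      rw [← Module.End.mul_apply e e, he.eq]
    simp [h2, h1]

/-- If `M` is dual π-Rickart, then every element of the left singular ideal
of `S = End_R(M)` (the elements whose left annihilator is an essential left
ideal) is nilpotent, and all such elements lie in the Jacobson radical of `S`. -/
theorem singular_nil_and_in_jacobson_of_dualPiRickart
    {R M : Type*} [Ring R] [AddCommGroup M] [Module R M]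
    (hdpr : ∀ f : Module.End R M, ∃ (e : Module.End R M) (n : ℕ),
      0 < n ∧ IsIdempotentElem e ∧ LinearMap.range (f ^ n) = LinearMap.range e) :
    ∀ f : Module.End R M,
      (∀ J : Submodule (Module.End R M) (Module.End R M), J ≠ ⊥ →
        LinearMap.ker (LinearMap.toSpanSingleton (Module.End R M)
          (Module.End R M) f) ⊓ J ≠ ⊥) →
      IsNilpotent f ∧ f ∈ Ideal.jacobson (⊥ : Ideal (Module.End R M)) := by
  intro f hf
  -- essentiality of the left annihilator of `g * f` for any `g`
  have hess : ∀ g : Module.End R M,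
      ∀ J : Submodule (Module.End R M) (Module.End R M), J ≠ ⊥ →
      LinearMap.ker (LinearMap.toSpanSingleton (Module.End R M)
        (Module.End R M) (g * f)) ⊓ J ≠ ⊥ := by
    intro g L hL
    by_cases hLg : L.map (LinearMap.toSpanSingleton (Module.End R M)
        (Module.End R M) g) = ⊥
    · -- every element of L kills g, hence kills g*f
      have hsub : L ≤ LinearMap.ker (LinearMap.toSpanSingleton (Module.End R M)
          (Module.End R M) (g * f)) := by
        intro l hl
        have h0 : l • g ∈ (⊥ : Submodule (Module.End R M) (Module.End R M)) :=
          hLg ▸ Submodule.mem_map_of_mem hl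
        rw [Submodule.mem_bot, smul_eq_mul] at h0
        rw [LinearMap.mem_ker, LinearMap.toSpanSingleton_apply, smul_eq_mul,
          ← mul_assoc, h0, zero_mul]
      rw [inf_eq_right.mpr hsub]
      exact hL
    · have h := hf _ hLg
      rw [Submodule.ne_bot_iff] at h ⊢
      obtain ⟨x, hx, hx0⟩ := h
      rw [Submodule.mem_inf] at hx
      obtain ⟨hxk, hxm⟩ := hx
      obtain ⟨l, hl, rfl⟩ := hxm
      rw [LinearMap.mem_ker, LinearMap.toSpanSingleton_apply,
        LinearMap.toSpanSingleton_apply, smul_eq_mul, smul_eq_mul] at hxk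
      refine ⟨l, ?_, ?_⟩
      · rw [Submodule.mem_inf, LinearMap.mem_ker, LinearMap.toSpanSingleton_apply,
          smul_eq_mul, ← mul_assoc]
        exact ⟨hxk, hl⟩
      · rintro rfl
        simp at hx0
  refine ⟨nilpotent_of_essential_ann hdpr f hf, ?_⟩
  rw [Ideal.jacobson, Ideal.mem_sInf]
  rintro J ⟨-, hJmax⟩
  by_contra hfJ
  have hlt : J < J ⊔ Submodule.span (Module.End R M) {f} := by
    refine lt_of_le_of_ne le_sup_left ?_
    intro h
    exact hfJ (h ▸ Submodule.mem_sup_right (Submodule.mem_span_singleton_self f))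
  have htop : J ⊔ Submodule.span (Module.End R M) {f} = ⊤ := hJmax.1.2 _ hlt
  have h1 : (1 : Module.End R M) ∈ J ⊔ Submodule.span (Module.End R M) {f} :=
    htop ▸ Submodule.mem_top
  rw [Submodule.mem_sup] at h1
  obtain ⟨y, hy, z, hz, hyz⟩ := h1
  rw [Submodule.mem_span_singleton] at hz
  obtain ⟨g, rfl⟩ := hz
  rw [smul_eq_mul] at hyz
  have hnil : IsNilpotent (g * f) := nilpotent_of_essential_ann hdpr _ (hess g)
  have hunit : IsUnit y := by
    rw [eq_sub_of_add_eq hyz]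
    exact hnil.isUnit_one_sub
  exact hJmax.ne_top (J.eq_top_of_isUnit_mem hy hunit)
end
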